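/- arXiv:2005.10934 — 2 statements merged into one kernel-verified Lean document; each statement's English description precedes it below -/
import Mathlib

section
/- Let (Ω, μ) be a probability space and let θ : ℕ → Ω → ℝ be an independent family of random variables, each distributed uniformly on [0, 2π]. Define X i ω = (cos (θ i ω), sin (θ i ω)) ∈ ℝ² and S n = ∑_{i<n} X i. Then for every n, the expected distance from the origin satisfies E[‖S n‖] ≤ √n. -/
/-!
Since the unit steps `X i` are independent with mean zero (`𝔼 cos θ = 𝔼 sin θ = 0` for
a uniform angle), they are orthogonal in `L²`: `𝔼⟪X i, X j⟫ = 𝔼 cos (θ i - θ j) = 0`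
for `i ≠ j`. Pythagoras then gives `𝔼‖S n‖² = ∑ 𝔼‖X i‖² = n`, and
`𝔼‖S n‖ ≤ √(𝔼‖S n‖²)` because a variance is nonnegative.
-/

open MeasureTheory ProbabilityTheory Real
open scoped InnerProductSpace

section Moments

variable {Ω : Type*} [MeasurableSpace Ω] {μ : Measure Ω}

theorem integral_le_sqrt_integral_sq [IsProbabilityMeasure μ] {Y : Ω → ℝ}
    (hY : MemLp Y 2 μ) : ∫ ω, Y ω ∂μ ≤ √(∫ ω, Y ω ^ 2 ∂μ) := by
  refine Real.le_sqrt_of_sq_le ?_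
  have hvar := variance_nonneg Y μ
  rw [variance_eq_sub hY, sub_nonneg] at hvar
  simpa only [Pi.pow_apply] using hvar

theorem integral_norm_sum_sq_eq_sum_of_orthogonal {ι E : Type*} [NormedAddCommGroup E]
    [InnerProductSpace ℝ E] (s : Finset ι) {X : ι → Ω → E}
    (hint : ∀ i ∈ s, ∀ j ∈ s, Integrable (fun ω => ⟪X i ω, X j ω⟫_ℝ) μ)
    (horth : ∀ i ∈ s, ∀ j ∈ s, i ≠ j → ∫ ω, ⟪X i ω, X j ω⟫_ℝ ∂μ = 0) :
    ∫ ω, ‖∑ i ∈ s, X i ω‖ ^ 2 ∂μ = ∑ i ∈ s, ∫ ω, ‖X i ω‖ ^ 2 ∂μ := by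
  have hexpand ω : ‖∑ i ∈ s, X i ω‖ ^ 2 = ∑ i ∈ s, ∑ j ∈ s, ⟪X i ω, X j ω⟫_ℝ := by
    rw [← real_inner_self_eq_norm_sq, sum_inner]
    simp only [inner_sum]
  simp only [hexpand]
  rw [integral_finsetSum _ fun i hi =>
    integrable_finsetSum _ fun j hj => hint i hi j hj]
  refine Finset.sum_congr rfl fun i hi => ?_
  rw [integral_finsetSum _ fun j hj => hint i hi j hj,
    Finset.sum_eq_single i (fun j hj hji => horth i hi j hj hji.symm) (absurd hi)]
  simp only [real_inner_self_eq_norm_sq]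

theorem integrable_cos_comp [IsFiniteMeasure μ] {f : Ω → ℝ} (hf : AEMeasurable f μ) :
    Integrable (fun ω => cos (f ω)) μ :=
  Integrable.of_bound (by fun_prop) 1 (ae_of_all _ fun ω => by simpa using abs_cos_le_one _)

theorem integrable_sin_comp [IsFiniteMeasure μ] {f : Ω → ℝ} (hf : AEMeasurable f μ) :
    Integrable (fun ω => sin (f ω)) μ :=
  Integrable.of_bound (by fun_prop) 1 (ae_of_all _ fun ω => by simpa using abs_sin_le_one _)

end Moments

section UniformAngle

variable {Ω : Type*} [MeasurableSpace Ω] {μ : Measure Ω}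

theorem integral_comp_of_map_eq_uniform {θ : Ω → ℝ} {a b : ℝ} (hab : a ≤ b)
    (hθ : AEMeasurable θ μ)
    (hunif : μ.map θ = (ENNReal.ofReal (b - a))⁻¹ • volume.restrict (Set.Icc a b))
    {f : ℝ → ℝ} (hf : Measurable f) :
    ∫ ω, f (θ ω) ∂μ = (b - a)⁻¹ * ∫ t in a..b, f t := by
  rw [← integral_map hθ hf.aestronglyMeasurable, hunif, integral_smul_measure,
    ENNReal.toReal_inv, ENNReal.toReal_ofReal (sub_nonneg.2 hab), smul_eq_mul,
    intervalIntegral.integral_of_le hab, integral_Icc_eq_integral_Ioc]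

variable {θ : Ω → ℝ}
  (hunif : μ.map θ = (ENNReal.ofReal (2 * π))⁻¹ • volume.restrict (Set.Icc 0 (2 * π)))
include hunif

theorem integral_cos_eq_zero_of_map_eq_uniform (hθ : AEMeasurable θ μ) :
    ∫ ω, cos (θ ω) ∂μ = 0 := by
  rw [integral_comp_of_map_eq_uniform two_pi_pos.le hθ (by rwa [sub_zero]) measurable_cos,
    integral_cos]
  simp

theorem integral_sin_eq_zero_of_map_eq_uniform (hθ : AEMeasurable θ μ) :
    ∫ ω, sin (θ ω) ∂μ = 0 := by
  rw [integral_comp_of_map_eq_uniform two_pi_pos.le hθ (by rwa [sub_zero]) measurable_sin,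
    integral_sin]
  simp

theorem integral_cos_sub_eq_zero_of_indepFun [IsFiniteMeasure μ] {θ' : Ω → ℝ}
    (hθ : AEMeasurable θ μ) (hθ' : AEMeasurable θ' μ) (hind : IndepFun θ θ' μ) :
    ∫ ω, cos (θ ω - θ' ω) ∂μ = 0 := by
  have hcos : IndepFun (fun ω => cos (θ ω)) (fun ω => cos (θ' ω)) μ :=
    hind.comp measurable_cos measurable_cos
  have hsin : IndepFun (fun ω => sin (θ ω)) (fun ω => sin (θ' ω)) μ :=
    hind.comp measurable_sin measurable_sin
  have hcos_int : Integrable (fun ω => cos (θ ω) * cos (θ' ω)) μ :=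
    hcos.integrable_mul (integrable_cos_comp hθ) (integrable_cos_comp hθ')
  have hsin_int : Integrable (fun ω => sin (θ ω) * sin (θ' ω)) μ :=
    hsin.integrable_mul (integrable_sin_comp hθ) (integrable_sin_comp hθ')
  simp only [cos_sub]
  rw [integral_add hcos_int hsin_int,
    hcos.integral_fun_mul_eq_mul_integral (by fun_prop) (by fun_prop),
    hsin.integral_fun_mul_eq_mul_integral (by fun_prop) (by fun_prop),
    integral_cos_eq_zero_of_map_eq_uniform hunif hθ,
    integral_sin_eq_zero_of_map_eq_uniform hunif hθ]
  simp

end UniformAngle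

section UnitVector

variable {x y : EuclideanSpace ℝ (Fin 2)} {a b : ℝ}

theorem EuclideanSpace.inner_eq_cos_sub (hx : x.ofLp = ![cos a, sin a])
    (hy : y.ofLp = ![cos b, sin b]) : ⟪x, y⟫_ℝ = cos (a - b) := by
  rw [EuclideanSpace.inner_eq_star_dotProduct, hx, hy, cos_sub]
  simp only [dotProduct, Fin.sum_univ_two, Matrix.cons_val_zero, Matrix.cons_val_one,
    star_trivial]
  ring

theorem EuclideanSpace.norm_eq_one_of_ofLp_eq_cos_sin (hx : x.ofLp = ![cos a, sin a]) :
    ‖x‖ = 1 := by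
  rw [norm_eq_sqrt_real_inner, EuclideanSpace.inner_eq_cos_sub hx hx, sub_self, cos_zero,
    sqrt_one]

theorem EuclideanSpace.measurable_of_ofLp_eq_cos_sin {Ω : Type*} [MeasurableSpace Ω]
    {θ : Ω → ℝ} (hθ : Measurable θ) {Y : Ω → EuclideanSpace ℝ (Fin 2)}
    (hY : ∀ ω, (Y ω).ofLp = ![cos (θ ω), sin (θ ω)]) : Measurable Y := by
  have hY' : Y = fun ω => WithLp.toLp 2 ![cos (θ ω), sin (θ ω)] :=
    funext fun ω => by rw [← hY, WithLp.toLp_ofLp]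
  rw [hY']
  fun_prop

end UnitVector

/-- **Lemma 2 (paper).** For a 2D random walk with unit step size, where the step
directions `θ i` are independent and uniformly distributed on `[0, 2π]`, the expected
distance from the origin after `n` steps is at most `√n` (with `n = T`, the SkewFit
scheme on average reaches at most `R₁ = √T` in one episode). -/
theorem expected_distance_randomWalk_2D_le_sqrt
    {Ω : Type*} [MeasurableSpace Ω] (μ : Measure Ω) [IsProbabilityMeasure μ]
    (θ : ℕ → Ω → ℝ) (hmeas : ∀ i, Measurable (θ i))
    (hindep : iIndepFun θ μ)
    (hunif : ∀ i, Measure.map (θ i) μ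
      = (ENNReal.ofReal (2 * π))⁻¹ • volume.restrict (Set.Icc (0 : ℝ) (2 * π)))
    (X : ℕ → Ω → EuclideanSpace ℝ (Fin 2))
    (hX : ∀ i ω, X i ω = ![Real.cos (θ i ω), Real.sin (θ i ω)])
    (S : ℕ → Ω → EuclideanSpace ℝ (Fin 2))
    (hS : ∀ n ω, S n ω = ∑ i ∈ Finset.range n, X i ω) :
    ∀ n : ℕ, ∫ ω, ‖S n ω‖ ∂μ ≤ Real.sqrt n := by
  intro n
  have hinner i j ω : ⟪X i ω, X j ω⟫_ℝ = cos (θ i ω - θ j ω) :=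
    EuclideanSpace.inner_eq_cos_sub (hX i ω) (hX j ω)
  have hnorm i ω : ‖X i ω‖ = 1 := EuclideanSpace.norm_eq_one_of_ofLp_eq_cos_sin (hX i ω)
  have hsecond : ∫ ω, ‖S n ω‖ ^ 2 ∂μ = n := by
    simp only [hS]
    rw [integral_norm_sum_sq_eq_sum_of_orthogonal]
    · simp [hnorm]
    · intro i _ j _
      simpa only [hinner] using integrable_cos_comp (by fun_prop)
    · intro i _ j _ hij
      simpa only [hinner] using integral_cos_sub_eq_zero_of_indepFun (hunif i)
        (hmeas i).aemeasurable (hmeas j).aemeasurable (hindep.indepFun hij)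
  have hSmeas : Measurable (S n) := by
    rw [funext (hS n)]
    exact Finset.measurable_sum _ fun i _ =>
      EuclideanSpace.measurable_of_ofLp_eq_cos_sin (hmeas i) (hX i)
  have hSbound ω : ‖S n ω‖ ≤ n := by
    simpa [hS, hnorm] using norm_sum_le (Finset.range n) fun i => X i ω
  have hSL2 : MemLp (fun ω => ‖S n ω‖) 2 μ :=
    MemLp.of_bound hSmeas.norm.aestronglyMeasurable n
      (ae_of_all _ fun ω => by simpa using hSbound ω)
  calc ∫ ω, ‖S n ω‖ ∂μ
      ≤ √(∫ ω, ‖S n ω‖ ^ 2 ∂μ) := integral_le_sqrt_integral_sq hSL2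
    _ = √n := by rw [hsecond]
end

section
/- Let k* be a natural number with k* ≥ 1 and let T be a real number with T ≥ k* + 1. Then k* + √(T − k*) > (1/(k* + 1)) · ∑_{k=0}^{k*} (k + √(T − k)), i.e., the ReachExplore bound R₃ = k* + √(T − k*) strictly exceeds the GoExplore bound R₂ obtained by averaging r_k = k + √(T − k) over the k* + 1 intermediate distances k = 0, 1, …, k*. -/
/-! The return `r_k = k + √(T - k)` strictly increases along unit steps while `k < T`: moving the
intermediate state one step further gains a full unit of distance but costs less than a unit of
`√(T - k)`. Hence every `r_k` with `k < k*` lies strictly below `r_{k*}`, and so does their mean. -/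

open Finset

lemma add_sqrt_sub_lt_add_sqrt_sub {x y T : ℝ} (hxy : x + 1 ≤ y) (hyT : y < T) :
    x + √(T - x) < y + √(T - y) := by
  set s := √(T - y)
  have hs : 0 < s := Real.sqrt_pos.mpr (by linarith)
  have hs2 : s ^ 2 = T - y := Real.sq_sqrt (by linarith)
  have : √(T - x) < (y - x) + s := by
    rw [Real.sqrt_lt' (by linarith)]
    nlinarith
  linarith

lemma sum_range_succ_lt_mul_of_lt {f : ℕ → ℝ} {n : ℕ} (hn : 1 ≤ n) (hf : ∀ k < n, f k < f n) :
    ∑ k ∈ range (n + 1), f k < (n + 1) * f n := by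
  have hlt : ∑ k ∈ range n, f k < ∑ _k ∈ range n, f n :=
    sum_lt_sum_of_nonempty (nonempty_range_iff.mpr (by omega)) fun k hk => hf k (mem_range.mp hk)
  rw [sum_range_succ]
  simp only [sum_const, card_range, nsmul_eq_mul] at hlt
  linarith

/-- **Part of Theorem 1 (paper): `R₃ > R₂`.** For a natural number frontier distance
`k* ≥ 1` and real episode length `T ≥ k* + 1`, the ReachExplore bound
`R₃ = k* + √(T − k*)` strictly exceeds the GoExplore bound
`R₂ = (1/(k*+1)) ∑_{k=0}^{k*} (k + √(T − k))`. -/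
theorem reachExplore_gt_goExplore (kstar : ℕ) (hk : 1 ≤ kstar) (T : ℝ)
    (hT : (kstar : ℝ) + 1 ≤ T) :
    (kstar : ℝ) + Real.sqrt (T - kstar)
      > (1 / ((kstar : ℝ) + 1)) *
        ∑ k ∈ Finset.range (kstar + 1), ((k : ℝ) + Real.sqrt (T - k)) := by
  have hsum := sum_range_succ_lt_mul_of_lt (f := fun k : ℕ => (k : ℝ) + √(T - k)) hk
    fun k hk' => add_sqrt_sub_lt_add_sqrt_sub (by exact_mod_cast hk') (by linarith)
  rw [gt_iff_lt, one_div_mul_eq_div, div_lt_iff₀' (by positivity)]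
  exact hsum
end
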